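/- Let I₀(x) = ∑_{k=0}^∞ (x/2)^{2k} / (k!)² and I₁(x) = ∑_{k=0}^∞ (x/2)^{2k+1} / (k!·(k+1)!). For λ > 0 define Φ(λ) = 1 + (8λ / I₁(1/λ)) · ( λ I₁(1/λ) − (1/2) I₀(1/λ) ). Then Φ(λ) → 1 as λ → 0⁺ (i.e., the limit along λ tending to 0 from within (0, ∞)). -/

import Mathlib

open Filter

/-- Modified Bessel function of the first kind of order 0. -/
noncomputable def besselI0 (x : ℝ) : ℝ :=
  ∑' k : ℕ, (x / 2) ^ (2 * k) / (k.factorial : ℝ) ^ 2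

/-- Modified Bessel function of the first kind of order 1. -/
noncomputable def besselI1 (x : ℝ) : ℝ :=
  ∑' k : ℕ, (x / 2) ^ (2 * k + 1) / ((k.factorial : ℝ) * ((k + 1).factorial : ℝ))

lemma besselI0_summable (x : ℝ) :
    Summable (fun k : ℕ => (x / 2) ^ (2 * k) / (k.factorial : ℝ) ^ 2) := by
  refine Summable.of_nonneg_of_le (fun k => ?_) (fun k => ?_)
    (Real.summable_pow_div_factorial ((x / 2) ^ 2))
  · have : 0 ≤ (x / 2) ^ (2 * k) := by rw [pow_mul]; positivity
    positivity
  · have hf1 : (1 : ℝ) ≤ (k.factorial : ℝ) := by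
      exact_mod_cast Nat.one_le_iff_ne_zero.mpr k.factorial_ne_zero
    rw [pow_mul]
    apply div_le_div_of_nonneg_left (by positivity) (by positivity)
    nlinarith

lemma besselI1_summable {x : ℝ} (hx : 0 ≤ x) :
    Summable (fun k : ℕ =>
      (x / 2) ^ (2 * k + 1) / ((k.factorial : ℝ) * ((k + 1).factorial : ℝ))) := by
  refine Summable.of_nonneg_of_le (fun k => ?_) (fun k => ?_)
    ((Real.summable_pow_div_factorial ((x / 2) ^ 2)).mul_left (x / 2))
  · positivity
  · have hf1 : (1 : ℝ) ≤ (k.factorial : ℝ) := by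
      exact_mod_cast Nat.one_le_iff_ne_zero.mpr k.factorial_ne_zero
    have hg1 : (1 : ℝ) ≤ ((k + 1).factorial : ℝ) := by
      exact_mod_cast Nat.one_le_iff_ne_zero.mpr (k + 1).factorial_ne_zero
    have hpow : (x / 2) ^ (2 * k + 1) = ((x / 2) ^ 2) ^ k * (x / 2) := by
      rw [← pow_mul, ← pow_succ]
    rw [hpow, mul_comm (((x / 2) ^ 2) ^ k), mul_div_assoc]
    apply mul_le_mul_of_nonneg_left _ (by positivity)
    apply div_le_div_of_nonneg_left (by positivity) (by positivity)
    nlinarith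

lemma besselI1_pos {x : ℝ} (hx : 0 < x) : 0 < besselI1 x := by
  refine Summable.tsum_pos (besselI1_summable hx.le) (fun k => by positivity) 0 ?_
  simp [Nat.factorial]
  positivity

lemma besselI0_nonneg {x : ℝ} (hx : 0 ≤ x) : 0 ≤ besselI0 x := by
  apply tsum_nonneg
  intro k
  have : 0 ≤ (x / 2) ^ (2 * k) := by rw [pow_mul]; positivity
  positivity

lemma besselI0_le_three_mul {x : ℝ} (hx : 2 ≤ x) : besselI0 x ≤ 3 * besselI1 x := by
  have hx0 : (0 : ℝ) < x := by linarith
  set b : ℕ → ℝ := fun k =>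
    (x / 2) ^ (2 * k + 1) / ((k.factorial : ℝ) * ((k + 1).factorial : ℝ)) with hbdef
  set c : ℕ → ℝ := fun k => Nat.casesOn k 0 b with hcdef
  have hb : Summable b := besselI1_summable hx0.le
  have hbnn : ∀ k, 0 ≤ b k := by intro k; positivity
  have hc : Summable c := by
    rw [← summable_nat_add_iff 1]
    exact hb
  have hcsum : ∑' k, c k = besselI1 x := by
    rw [Summable.tsum_eq_zero_add hc]
    simp [hcdef, besselI1, hbdef]
  have hterm : ∀ k : ℕ,
      (x / 2) ^ (2 * k) / (k.factorial : ℝ) ^ 2 ≤ 2 * b k + c k := by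
    intro k
    have hF : (1 : ℝ) ≤ (k.factorial : ℝ) := by
      exact_mod_cast Nat.one_le_iff_ne_zero.mpr k.factorial_ne_zero
    by_cases h : (k : ℝ) + 1 ≤ x
    · have hcnn : 0 ≤ c k := by
        cases k with
        | zero => simp [hcdef]
        | succ m => exact hbnn m
      have key : (x / 2) ^ (2 * k) / (k.factorial : ℝ) ^ 2 ≤ 2 * b k := by
        have hpow : (x / 2) ^ (2 * k + 1) = (x / 2) ^ (2 * k) * (x / 2) := pow_succ _ _
        have hP : (0 : ℝ) < (x / 2) ^ (2 * k) := by rw [pow_mul]; positivity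
        have hG : ((k + 1).factorial : ℝ) = ((k : ℝ) + 1) * (k.factorial : ℝ) := by
          rw [Nat.factorial_succ]; push_cast; ring
        rw [hbdef]
        simp only [hpow, hG]
        rw [mul_div_assoc', div_le_div_iff₀ (by positivity) (by positivity)]
        have hFpos : (0 : ℝ) < (k.factorial : ℝ) := by linarith
        nlinarith [mul_nonneg (mul_nonneg hP.le (sq_nonneg (k.factorial : ℝ)))
          (by linarith : (0 : ℝ) ≤ x - ((k : ℝ) + 1))]
      linarith
    · push_neg at h
      obtain ⟨m, rfl⟩ : ∃ m, k = m + 1 := by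
        have : k ≠ 0 := by
          rintro rfl
          simp at h; linarith
        exact ⟨k - 1, by omega⟩
      have hbk : 0 ≤ 2 * b (m + 1) := by positivity
      have hFm : (1 : ℝ) ≤ (m.factorial : ℝ) := by
        exact_mod_cast Nat.one_le_iff_ne_zero.mpr m.factorial_ne_zero
      have key : (x / 2) ^ (2 * (m + 1)) / (((m + 1).factorial : ℝ)) ^ 2 ≤ b m := by
        have hpow : (x / 2) ^ (2 * (m + 1)) = (x / 2) ^ (2 * m + 1) * (x / 2) := by
          rw [show 2 * (m + 1) = (2 * m + 1) + 1 by ring, pow_succ]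
        have hQ : (0 : ℝ) < (x / 2) ^ (2 * m + 1) := by positivity
        have hG : ((m + 1).factorial : ℝ) = ((m : ℝ) + 1) * (m.factorial : ℝ) := by
          rw [Nat.factorial_succ]; push_cast; ring
        have hxle : x ≤ 2 * ((m : ℝ) + 1) := by
          have h' : x < (m : ℝ) + 1 + 1 := by exact_mod_cast h
          have hm : (0 : ℝ) ≤ (m : ℝ) := Nat.cast_nonneg m
          linarith
        rw [hbdef]
        simp only [hpow, hG]
        rw [div_le_div_iff₀ (by positivity) (by positivity)]
        nlinarith [mul_nonneg (mul_nonneg (mul_nonneg hQ.le (sq_nonneg (m.factorial : ℝ)))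
          (by positivity : (0 : ℝ) ≤ (m : ℝ) + 1))
          (by linarith : (0 : ℝ) ≤ 2 * ((m : ℝ) + 1) - x)]
      calc (x / 2) ^ (2 * (m + 1)) / (((m + 1).factorial : ℝ)) ^ 2
          ≤ b m := key
        _ = c (m + 1) := rfl
        _ ≤ 2 * b (m + 1) + c (m + 1) := by linarith
  have hsum2 : Summable (fun k => 2 * b k + c k) := (hb.mul_left 2).add hc
  have hle := Summable.tsum_le_tsum hterm (besselI0_summable x) hsum2
  rw [besselI0]
  calc (∑' k : ℕ, (x / 2) ^ (2 * k) / (k.factorial : ℝ) ^ 2)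
      ≤ ∑' k, (2 * b k + c k) := hle
    _ = 2 * (∑' k, b k) + ∑' k, c k := by
        rw [Summable.tsum_add (hb.mul_left 2) hc, tsum_mul_left]
    _ = 3 * besselI1 x := by
        rw [hcsum]
        have hbsum : (∑' k, b k) = besselI1 x := rfl
        rw [hbsum]; ring

/-- The dimensionless discharge rate of the strong-adherence Poiseuille flow
converges to the classical value `1` as `λ → 0⁺`. -/
theorem poiseuille_strong_adherence_discharge_convergence :
    Tendsto (fun lam : ℝ =>
        1 + 8 * lam / besselI1 (1 / lam)
          * (lam * besselI1 (1 / lam) - 1 / 2 * besselI0 (1 / lam)))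
      (nhdsWithin 0 (Set.Ioi 0)) (nhds 1) := by
  set f : ℝ → ℝ := fun lam =>
    1 + 8 * lam / besselI1 (1 / lam)
      * (lam * besselI1 (1 / lam) - 1 / 2 * besselI0 (1 / lam)) with hf
  have h0 : Tendsto (fun lam => f lam - 1) (nhdsWithin 0 (Set.Ioi 0)) (nhds 0) := by
    apply squeeze_zero_norm' (a := fun lam : ℝ => 8 * lam ^ 2 + 12 * lam)
    · have hmem : Set.Ioo (0 : ℝ) (1 / 2) ∈ nhdsWithin (0 : ℝ) (Set.Ioi 0) :=
        Ioo_mem_nhdsGT_of_mem (by norm_num)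
      filter_upwards [hmem] with lam hlam
      obtain ⟨hl0, hl2⟩ := hlam
      have hx2 : (2 : ℝ) ≤ 1 / lam := by
        rw [le_div_iff₀ hl0]; linarith
      have hx0 : (0 : ℝ) < 1 / lam := by positivity
      set A := besselI1 (1 / lam) with hA
      set B := besselI0 (1 / lam) with hB
      have hApos : 0 < A := besselI1_pos hx0
      have hBnn : 0 ≤ B := besselI0_nonneg hx0.le
      have hBA : B ≤ 3 * A := besselI0_le_three_mul hx2
      have hrw : f lam - 1 = 8 * lam ^ 2 - 4 * lam * (B / A) := by
        rw [hf]
        show 1 + 8 * lam / A * (lam * A - 1 / 2 * B) - 1 = _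
        field_simp [hApos.ne']
        ring
      rw [Real.norm_eq_abs, hrw, abs_le]
      have ht0 : 0 ≤ B / A := div_nonneg hBnn hApos.le
      have ht3 : B / A ≤ 3 := (div_le_iff₀ hApos).mpr (by linarith)
      constructor <;> nlinarith
    · have hcont : Continuous (fun lam : ℝ => 8 * lam ^ 2 + 12 * lam) := by
        continuity
      have := (hcont.tendsto 0).mono_left
        (nhdsWithin_le_nhds : nhdsWithin (0 : ℝ) (Set.Ioi 0) ≤ nhds 0)
      simpa using this
  have := h0.add (tendsto_const_nhds : Tendsto (fun _ : ℝ => (1 : ℝ)) _ (nhds 1))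
  simpa using this
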